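/- Let A be a deterministic Büchi automaton. Then for all states q, q' of A, delayed simulation equivalence and delayed bisimulation coincide: q ≃_de q' if and only if q ≈_de q'. -/
import Mathlib

set_option linter.unusedVariables false

namespace Games

/-- A game arena: a directed graph whose vertices are partitioned between
Player 0 (`owner v = false`) and Player 1 (`owner v = true`). -/
structure GameGraph (V : Type*) where
  E : V → V → Prop
  owner : V → Bool

/-- An infinite path through the game graph. -/
def IsPlay {V : Type*} (G : GameGraph V) (ρ : ℕ → V) : Prop :=
  ∀ i, G.E (ρ i) (ρ (i + 1))

/-- A property of positions holds infinitely often. -/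
def InfOften (p : ℕ → Prop) : Prop := ∀ n, ∃ m, n ≤ m ∧ p m

/-- The set of elements occurring infinitely often in a sequence. -/
def InfSet {α : Type*} (ρ : ℕ → α) : Set α := {u | InfOften fun i => ρ i = u}

/-- Game simulation (Definition 1 of the paper): the game `(G, φ)` is simulated by the
game `(G', φ')` on the extended vertex set `S × V` with initial memory content `s0`. -/
structure IsSimulation {V S : Type*} (G : GameGraph V) (φ : (ℕ → V) → Prop)
    (G' : GameGraph (S × V)) (φ' : (ℕ → S × V) → Prop) (s0 : S) : Prop where
  owner_eq : ∀ (s : S) (v : V), G'.owner (s, v) = G.owner v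
  edge_lift : ∀ (s : S) (v v' : V), G.E v v' → ∃ s', G'.E (s, v) (s', v')
  mem_unique : ∀ (s : S) (v : V) (p₁ p₂ : S × V), G'.E (s, v) p₁ → G'.E (s, v) p₂ → p₁.1 = p₂.1
  edge_proj : ∀ (s s' : S) (v v' : V), G'.E (s, v) (s', v') → G.E v v'
  win_iff : ∀ ρ : ℕ → V, IsPlay G ρ → ∀ ρ' : ℕ → S × V,
      ρ' 0 = (s0, ρ 0) → (∀ i, (ρ' i).2 = ρ i) → IsPlay G' ρ' → (φ ρ ↔ φ' ρ')

/-- A play is consistent with the (history-dependent) strategy `f` of Player 0. -/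
def StratConsistent {V : Type*} (G : GameGraph V) (f : List V → V → V) (ρ : ℕ → V) : Prop :=
  ∀ i, G.owner (ρ i) = false → ρ (i + 1) = f (List.ofFn fun j : Fin i => ρ j) (ρ i)

/-- Player 0 has a strategy from `v` forcing every resulting play to satisfy `ψ`. -/
def ForcesFrom {V : Type*} (G : GameGraph V) (ψ : (ℕ → V) → Prop) (v : V) : Prop :=
  ∃ f : List V → V → V, (∀ (h : List V) (u : V), G.owner u = false → G.E u (f h u)) ∧
    ∀ ρ : ℕ → V, ρ 0 = v → IsPlay G ρ → StratConsistent G f ρ → ψ ρ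

end Games
namespace Games

/-- A (nondeterministic) Büchi automaton. -/
structure BA (Q A : Type*) where
  init : Q
  Tr : Q → A → Q → Prop
  final : Q → Prop

/-- Büchi acceptance: some run on `α` visits final states infinitely often. -/
def BAAccept {Q A : Type*} (M : BA Q A) (α : ℕ → A) : Prop :=
  ∃ ρ : ℕ → Q, ρ 0 = M.init ∧ (∀ i, M.Tr (ρ i) (α i) (ρ (i + 1))) ∧
    InfOften fun i => M.final (ρ i)

/-- The ω-language recognized by a Büchi automaton. -/
def BALang {Q A : Type*} (M : BA Q A) : Set (ℕ → A) := {α | BAAccept M α}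

/-- Duplicator's run in the delayed simulation game, determined by a strategy `τ`
(a function of the history of letters and Spoiler states), Duplicator's start state `q'`,
Spoiler's letters `α` and Spoiler's run `ρ`. -/
def dupRun {Q A : Type*} (τ : List (A × Q) → Q) (q' : Q) (α : ℕ → A) (ρ : ℕ → Q) : ℕ → Q
  | 0 => q'
  | i + 1 => τ ((List.range (i + 1)).map fun j => (α j, ρ (j + 1)))

/-- `q'` delayed simulates `q` (written `q ⪯_de q'`): Duplicator has a winning strategy
in the delayed simulation game `G_de(q, q')`: against every legal behaviour of Spoiler,
Duplicator's answers are legal and every final state visited by Spoiler at position `i`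
is answered by a final state of Duplicator at some position `j ≥ i`. -/
def DelSim {Q A : Type*} (M : BA Q A) (q q' : Q) : Prop :=
  ∃ τ : List (A × Q) → Q, ∀ (α : ℕ → A) (ρ : ℕ → Q), ρ 0 = q →
    (∀ i, M.Tr (ρ i) (α i) (ρ (i + 1))) →
    (∀ i, M.Tr (dupRun τ q' α ρ i) (α i) (dupRun τ q' α ρ (i + 1))) ∧
    (∀ i, M.final (ρ i) → ∃ j, i ≤ j ∧ M.final (dupRun τ q' α ρ j))

/-- Delayed simulation equivalence `q ≃_de q'`. -/
def DelSimEq {Q A : Type*} (M : BA Q A) (q q' : Q) : Prop :=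
  DelSim M q q' ∧ DelSim M q' q

end Games
namespace Games

/-- The history visible to Duplicator in a bisimulation game: for each round the side
chosen by Spoiler, the letter, and the state chosen by Spoiler. -/
def bisHist {Q A : Type*} (b : ℕ → Bool) (α : ℕ → A) (s : ℕ → Q) (i : ℕ) :
    List (Bool × A × Q) :=
  (List.range (i + 1)).map fun j => (b j, α j, s j)

/-- The run built on side `side` in a bisimulation game: in round `i` Spoiler extends
the run of side `b i` by the state `s i`, and Duplicator extends the other run
according to the strategy `τ`. -/
def bisRun {Q A : Type*} (τ : List (Bool × A × Q) → Q) (side : Bool) (q : Q)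
    (b : ℕ → Bool) (α : ℕ → A) (s : ℕ → Q) : ℕ → Q
  | 0 => q
  | i + 1 => if b i = side then s i else τ (bisHist b α s i)

/-- Delayed bisimulation `q ≈_de q'`: Duplicator has a winning strategy in the game where
in each round Spoiler chooses which of the two runs to extend (by a legal transition) and
Duplicator extends the other run with the same letter; every final state at position `i`
of either run must be answered by a final state at some position `j ≥ i` of the other run. -/
def DelBisim {Q A : Type*} (M : BA Q A) (q q' : Q) : Prop :=
  ∃ τ : List (Bool × A × Q) → Q, ∀ (b : ℕ → Bool) (α : ℕ → A) (s : ℕ → Q),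
    (∀ i, (b i = false → M.Tr (bisRun τ false q b α s i) (α i) (s i)) ∧
          (b i = true → M.Tr (bisRun τ true q' b α s i) (α i) (s i))) →
    (∀ i, M.Tr (bisRun τ false q b α s i) (α i) (bisRun τ false q b α s (i + 1)) ∧
          M.Tr (bisRun τ true q' b α s i) (α i) (bisRun τ true q' b α s (i + 1))) ∧
    (∀ i, (M.final (bisRun τ false q b α s i) →
              ∃ j, i ≤ j ∧ M.final (bisRun τ true q' b α s j)) ∧
          (M.final (bisRun τ true q' b α s i) →
              ∃ j, i ≤ j ∧ M.final (bisRun τ false q b α s j)))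

/-- Direct bisimulation `q ≈_di q'`: as delayed bisimulation, but the two runs must agree
on finality at every position. -/
def DirBisim {Q A : Type*} (M : BA Q A) (q q' : Q) : Prop :=
  ∃ τ : List (Bool × A × Q) → Q, ∀ (b : ℕ → Bool) (α : ℕ → A) (s : ℕ → Q),
    (∀ i, (b i = false → M.Tr (bisRun τ false q b α s i) (α i) (s i)) ∧
          (b i = true → M.Tr (bisRun τ true q' b α s i) (α i) (s i))) →
    (∀ i, M.Tr (bisRun τ false q b α s i) (α i) (bisRun τ false q b α s (i + 1)) ∧
          M.Tr (bisRun τ true q' b α s i) (α i) (bisRun τ true q' b α s (i + 1))) ∧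
    (∀ i, M.final (bisRun τ false q b α s i) ↔ M.final (bisRun τ true q' b α s i))

/-- The final states of the closure `cl(A)`: the least set containing the final states
and every state all of whose successors are already in the set. -/
inductive ClFin {Q A : Type*} (M : BA Q A) : Q → Prop
  | base (q : Q) : M.final q → ClFin M q
  | step (q : Q) : (∀ a q', M.Tr q a q' → ClFin M q') → ClFin M q

/-- The closure `cl(A)` of a Büchi automaton. -/
def clBA {Q A : Type*} (M : BA Q A) : BA Q A where
  init := M.init
  Tr := M.Tr
  final := ClFin M

end Games
namespace Games

/-- The unique run of a deterministic automaton with transition function `d`. -/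
def detRun {Q A : Type*} (d : Q → A → Q) (q0 : Q) (α : ℕ → A) : ℕ → Q
  | 0 => q0
  | i + 1 => d (detRun d q0 α i) (α i)

lemma run_eq_detRun {Q A : Type*} (M : BA Q A) (d : Q → A → Q)
    (hdu : ∀ q a r, M.Tr q a r → r = d q a) (q0 : Q) (α : ℕ → A) (ρ : ℕ → Q)
    (h0 : ρ 0 = q0) (htr : ∀ i, M.Tr (ρ i) (α i) (ρ (i + 1))) :
    ∀ i, ρ i = detRun d q0 α i := by
  intro i
  induction i with
  | zero => simpa [detRun] using h0
  | succ i ih =>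
      have := hdu _ _ _ (htr i)
      rw [detRun, ← ih]
      exact this

lemma foldl_range_eq_detRun {Q A : Type*} {β : Type*} (d : Q → A → Q) (q0 : Q)
    (α : ℕ → A) (g : ℕ → β) (ℓ : β → A) (hg : ∀ j, ℓ (g j) = α j) :
    ∀ n, ((List.range n).map g).foldl (fun s p => d s (ℓ p)) q0 = detRun d q0 α n := by
  intro n
  induction n with
  | zero => simp [detRun]
  | succ n ih => simp [List.range_succ, detRun, ih, hg]

/-- Characterization of delayed simulation for deterministic automata. -/
lemma delSim_iff_det {Q A : Type*} (M : BA Q A) (d : Q → A → Q)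
    (hdt : ∀ q a, M.Tr q a (d q a)) (hdu : ∀ q a r, M.Tr q a r → r = d q a)
    (q q' : Q) :
    DelSim M q q' ↔ ∀ (α : ℕ → A) (i : ℕ), M.final (detRun d q α i) →
      ∃ j, i ≤ j ∧ M.final (detRun d q' α j) := by
  constructor
  · rintro ⟨τ, hτ⟩ α i hf
    obtain ⟨htr, hwin⟩ := hτ α (detRun d q α) rfl (fun i => hdt _ _)
    have hdup : ∀ j, dupRun τ q' α (detRun d q α) j = detRun d q' α j :=
      run_eq_detRun M d hdu q' α _ rfl htr
    obtain ⟨j, hij, hfj⟩ := hwin i hf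
    exact ⟨j, hij, by rwa [hdup j] at hfj⟩
  · intro h
    refine ⟨fun l => l.foldl (fun s p => d s p.1) q', ?_⟩
    intro α ρ h0 htr
    set τ : List (A × Q) → Q := fun l => l.foldl (fun s p => d s p.1) q' with hτ
    have hdup : ∀ i, dupRun τ q' α ρ i = detRun d q' α i := by
      intro i
      cases i with
      | zero => rfl
      | succ i =>
          show (((List.range (i + 1)).map fun j => (α j, ρ (j + 1))).foldl
            (fun s p => d s p.1) q') = detRun d q' α (i + 1)
          exact foldl_range_eq_detRun d q' α _ Prod.fst (fun j => rfl) (i + 1)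
    constructor
    · intro i
      rw [hdup i, hdup (i + 1), detRun]
      exact hdt _ _
    · intro i hf
      have hρ : ρ i = detRun d q α i := run_eq_detRun M d hdu q α ρ h0 htr i
      rw [hρ] at hf
      obtain ⟨j, hij, hfj⟩ := h α i hf
      exact ⟨j, hij, by rwa [hdup j]⟩

/-- Characterization of delayed bisimulation for deterministic automata. -/
lemma delBisim_iff_det {Q A : Type*} (M : BA Q A) (d : Q → A → Q)
    (hdt : ∀ q a, M.Tr q a (d q a)) (hdu : ∀ q a r, M.Tr q a r → r = d q a)
    (q q' : Q) :
    DelBisim M q q' ↔ ∀ α : ℕ → A,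
      (∀ i, M.final (detRun d q α i) → ∃ j, i ≤ j ∧ M.final (detRun d q' α j)) ∧
      (∀ i, M.final (detRun d q' α i) → ∃ j, i ≤ j ∧ M.final (detRun d q α j)) := by
  constructor
  · rintro ⟨τ, hτ⟩ α
    constructor
    · -- Spoiler always plays on the `false` side along `detRun d q α`
      set b : ℕ → Bool := fun _ => false with hb
      set s : ℕ → Q := fun i => detRun d q α (i + 1) with hs
      have hfalse : ∀ i, bisRun τ false q b α s i = detRun d q α i := by
        intro i
        induction i with
        | zero => rfl
        | succ i ih => simp [bisRun, hb, hs]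
      have hleg : ∀ i, (b i = false → M.Tr (bisRun τ false q b α s i) (α i) (s i)) ∧
          (b i = true → M.Tr (bisRun τ true q' b α s i) (α i) (s i)) := by
        intro i
        refine ⟨fun _ => ?_, fun hc => by simp [hb] at hc⟩
        rw [hfalse i]
        exact hdt _ _
      obtain ⟨htr, hwin⟩ := hτ b α s hleg
      have htrue : ∀ i, bisRun τ true q' b α s i = detRun d q' α i :=
        run_eq_detRun M d hdu q' α _ rfl (fun i => (htr i).2)
      intro i hf
      rw [← hfalse i] at hf
      obtain ⟨j, hij, hfj⟩ := (hwin i).1 hf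
      exact ⟨j, hij, by rwa [htrue j] at hfj⟩
    · -- Spoiler always plays on the `true` side along `detRun d q' α`
      set b : ℕ → Bool := fun _ => true with hb
      set s : ℕ → Q := fun i => detRun d q' α (i + 1) with hs
      have htrue : ∀ i, bisRun τ true q' b α s i = detRun d q' α i := by
        intro i
        induction i with
        | zero => rfl
        | succ i ih => simp [bisRun, hb, hs]
      have hleg : ∀ i, (b i = false → M.Tr (bisRun τ false q b α s i) (α i) (s i)) ∧
          (b i = true → M.Tr (bisRun τ true q' b α s i) (α i) (s i)) := by
        intro i
        refine ⟨fun hc => by simp [hb] at hc, fun _ => ?_⟩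
        rw [htrue i]
        exact hdt _ _
      obtain ⟨htr, hwin⟩ := hτ b α s hleg
      have hfalse : ∀ i, bisRun τ false q b α s i = detRun d q α i :=
        run_eq_detRun M d hdu q α _ rfl (fun i => (htr i).1)
      intro i hf
      rw [← htrue i] at hf
      obtain ⟨j, hij, hfj⟩ := (hwin i).2 hf
      exact ⟨j, hij, by rwa [hfalse j] at hfj⟩
  · intro h
    refine ⟨fun l => match l.getLast? with
      | none => q
      | some p => l.foldl (fun st r => d st r.2.1) (if p.1 then q else q'), ?_⟩
    set τ : List (Bool × A × Q) → Q := fun l => match l.getLast? with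
      | none => q
      | some p => l.foldl (fun st r => d st r.2.1) (if p.1 then q else q') with hτdef
    intro b α s hleg
    have hlast : ∀ i, (bisHist b α s i).getLast? = some (b i, α i, s i) := by
      intro i
      simp [bisHist, List.range_succ]
    have hfoldf : ∀ i, (bisHist b α s i).foldl (fun st r => d st r.2.1) q
        = detRun d q α (i + 1) := fun i =>
      foldl_range_eq_detRun d q α (fun j => (b j, α j, s j)) (fun r => r.2.1)
        (fun j => rfl) (i + 1)
    have hfoldt : ∀ i, (bisHist b α s i).foldl (fun st r => d st r.2.1) q'
        = detRun d q' α (i + 1) := fun i =>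
      foldl_range_eq_detRun d q' α (fun j => (b j, α j, s j)) (fun r => r.2.1)
        (fun j => rfl) (i + 1)
    have key : ∀ i, bisRun τ false q b α s i = detRun d q α i ∧
        bisRun τ true q' b α s i = detRun d q' α i := by
      intro i
      induction i with
      | zero => exact ⟨rfl, rfl⟩
      | succ i ih =>
          constructor
          · show (if b i = false then s i else τ (bisHist b α s i)) = detRun d q α (i + 1)
            by_cases hbi : b i = false
            · have := (hleg i).1 hbi
              rw [(ih).1] at this
              have := hdu _ _ _ this
              simpa [hbi, detRun] using this
            · have hbi' : b i = true := by
                cases hb : b i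
                · exact absurd hb hbi
                · rfl
              rw [if_neg hbi]
              show τ (bisHist b α s i) = detRun d q α (i + 1)
              rw [hτdef]
              simp only [hlast i, hbi', if_pos rfl]
              exact hfoldf i
          · show (if b i = true then s i else τ (bisHist b α s i)) = detRun d q' α (i + 1)
            by_cases hbi : b i = true
            · have := (hleg i).2 hbi
              rw [(ih).2] at this
              have := hdu _ _ _ this
              simpa [hbi, detRun] using this
            · have hbi' : b i = false := by
                cases hb : b i
                · rfl
                · exact absurd hb hbi
              rw [if_neg hbi]
              show τ (bisHist b α s i) = detRun d q' α (i + 1)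
              rw [hτdef]
              simp only [hlast i, hbi', Bool.false_eq_true, if_false]
              exact hfoldt i
    constructor
    · intro i
      rw [(key i).1, (key (i + 1)).1, (key i).2, (key (i + 1)).2]
      exact ⟨hdt _ _, hdt _ _⟩
    · intro i
      constructor
      · intro hf
        rw [(key i).1] at hf
        obtain ⟨j, hij, hfj⟩ := (h α).1 i hf
        exact ⟨j, hij, by rw [(key j).2]; exact hfj⟩
      · intro hf
        rw [(key i).2] at hf
        obtain ⟨j, hij, hfj⟩ := (h α).2 i hf
        exact ⟨j, hij, by rw [(key j).1]; exact hfj⟩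

/-- Remark 4 of the paper. On a deterministic Büchi automaton, delayed
simulation equivalence and delayed bisimulation coincide. -/
theorem delayed_sim_eq_delayed_bisim_of_deterministic {Q A : Type*} (M : BA Q A)
    (hdet : ∀ (q : Q) (a : A), ∃! q', M.Tr q a q') (q q' : Q) :
    DelSimEq M q q' ↔ DelBisim M q q' := by
  choose d hd using hdet
  have hdt : ∀ q a, M.Tr q a (d q a) := fun q a => (hd q a).1
  have hdu : ∀ q a r, M.Tr q a r → r = d q a := fun q a r h => (hd q a).2 r h
  rw [DelSimEq, delSim_iff_det M d hdt hdu q q', delSim_iff_det M d hdt hdu q' q,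
    delBisim_iff_det M d hdt hdu q q']
  exact forall_and.symm

end Games
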